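/- Let A be an n×n SPD matrix, b ∈ ℝⁿ, and x ∈ ℝⁿ. With κ(A) = ‖A‖‖A⁻¹‖, ψ = ‖|A|‖ (spectral norm of the entrywise absolute value of A), and κ̲(A) = ψ‖A⁻¹‖, it holds that ‖A^{-1/2}(|b| + |A|·|x|)‖ ≤ (κ(A)^{1/2} + κ̲(A))‖A⁻¹b‖_A + κ̲(A)‖x − A⁻¹b‖_A, where |·| is taken entrywise. -/

import Mathlib

open Matrix

noncomputable def vnorm {n : ℕ} (x : Fin n → ℝ) : ℝ := Real.sqrt (x ⬝ᵥ x)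

noncomputable def enorm {n : ℕ} (A : Matrix (Fin n) (Fin n) ℝ) (x : Fin n → ℝ) : ℝ :=
  Real.sqrt (A.mulVec x ⬝ᵥ x)

noncomputable def specNorm {m n : ℕ} (M : Matrix (Fin m) (Fin n) ℝ) : ℝ :=
  ⨆ x : {x : Fin n → ℝ // vnorm x = 1}, vnorm (M.mulVec x.1)

noncomputable def eOpNorm {n : ℕ} (A M : Matrix (Fin n) (Fin n) ℝ) : ℝ :=
  ⨆ x : {x : Fin n → ℝ // enorm A x = 1}, enorm A (M.mulVec x.1)

/-- P has full column rank. -/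
def FullColRank {n nc : ℕ} (P : Matrix (Fin n) (Fin nc) ℝ) : Prop :=
  LinearIndependent ℝ (fun j : Fin nc => (fun i : Fin n => P i j))

/-!
For a positive semidefinite `M`, `enorm M` is the seminorm of the inner product `⟪u, v⟫ = uᵀ M v`
(`Matrix.toInnerProductSpace`), and `specNorm` is the ℓ² operator norm. Cauchy–Schwarz in the
`M`-inner product gives `‖M y‖² = ⟪y, M y⟫_M ≤ ‖y‖_M ‖M y‖_M ≤ ‖y‖_M ‖M‖^{1/2} ‖M y‖`, i.e.
`‖M y‖ ≤ ‖M‖^{1/2} ‖y‖_M`; applied to `A⁻¹` and `y = A v` this is `‖v‖ ≤ ‖A⁻¹‖^{1/2} ‖v‖_A`.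
The theorem follows from the triangle inequality for `‖·‖_{A⁻¹}`, the bound
`‖y‖_{A⁻¹} ≤ ‖A⁻¹‖^{1/2} ‖y‖`, `‖|z|‖ = ‖z‖`, and the splitting `x = A⁻¹b + (x - A⁻¹b)`.
-/

section EuclideanNorm
variable {m n : ℕ}

lemma vnorm_eq_norm (x : Fin n → ℝ) : vnorm x = ‖WithLp.toLp 2 x‖ := by
  rw [EuclideanSpace.norm_eq, vnorm, dotProduct]
  simp [sq]

lemma vnorm_nonneg (x : Fin n → ℝ) : 0 ≤ vnorm x := Real.sqrt_nonneg _

lemma vnorm_mul_self (x : Fin n → ℝ) : vnorm x * vnorm x = x ⬝ᵥ x :=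
  Real.mul_self_sqrt (Finset.sum_nonneg fun i _ => mul_self_nonneg (x i))

lemma vnorm_add_le (x y : Fin n → ℝ) : vnorm (x + y) ≤ vnorm x + vnorm y := by
  simpa only [vnorm_eq_norm, WithLp.toLp_add] using norm_add_le (WithLp.toLp 2 x) (WithLp.toLp 2 y)

lemma vnorm_abs (x : Fin n → ℝ) : vnorm (fun i => |x i|) = vnorm x := by
  simp [vnorm, dotProduct, abs_mul_abs_self]

lemma dotProduct_le_vnorm_mul_vnorm (x y : Fin n → ℝ) : x ⬝ᵥ y ≤ vnorm x * vnorm y := by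
  simpa [vnorm_eq_norm, EuclideanSpace.inner_eq_star_dotProduct, dotProduct_comm, mul_comm] using
    real_inner_le_norm (WithLp.toLp 2 x) (WithLp.toLp 2 y)

open scoped Matrix.Norms.L2Operator in
lemma specNorm_eq_l2_opNorm (M : Matrix (Fin m) (Fin n) ℝ) : specNorm M = ‖M‖ := by
  rw [l2_opNorm_def, ← ContinuousLinearMap.sSup_sphere_eq_norm, sSup_image', specNorm]
  let e : {x : Fin n → ℝ // vnorm x = 1} ≃ Metric.sphere (0 : EuclideanSpace ℝ (Fin n)) 1 :=
    (WithLp.linearEquiv 2 ℝ (Fin n → ℝ)).symm.toEquiv.subtypeEquiv fun x => by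
      simp [vnorm_eq_norm]
  refine e.iSup_congr fun x => ?_
  simp [e, vnorm_eq_norm]

open scoped Matrix.Norms.L2Operator in
lemma specNorm_nonneg (M : Matrix (Fin m) (Fin n) ℝ) : 0 ≤ specNorm M :=
  specNorm_eq_l2_opNorm M ▸ norm_nonneg M

open scoped Matrix.Norms.L2Operator in
lemma vnorm_mulVec_le (M : Matrix (Fin m) (Fin n) ℝ) (x : Fin n → ℝ) :
    vnorm (M *ᵥ x) ≤ specNorm M * vnorm x := by
  simpa [specNorm_eq_l2_opNorm, vnorm_eq_norm] using M.l2_opNorm_mulVec (WithLp.toLp 2 x)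

end EuclideanNorm

lemma enorm_nonneg {n : ℕ} (M : Matrix (Fin n) (Fin n) ℝ) (x : Fin n → ℝ) : 0 ≤ enorm M x :=
  Real.sqrt_nonneg _

lemma enorm_le_sqrt_specNorm_mul_vnorm {n : ℕ} (M : Matrix (Fin n) (Fin n) ℝ) (x : Fin n → ℝ) :
    enorm M x ≤ √(specNorm M) * vnorm x := by
  rw [_root_.enorm, vnorm, ← Real.sqrt_mul (specNorm_nonneg M)]
  refine Real.sqrt_le_sqrt ?_
  calc M *ᵥ x ⬝ᵥ x ≤ vnorm (M *ᵥ x) * vnorm x := dotProduct_le_vnorm_mul_vnorm _ _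
    _ ≤ specNorm M * vnorm x * vnorm x := by
      grw [vnorm_mulVec_le M x]
      exact vnorm_nonneg x
    _ = specNorm M * (x ⬝ᵥ x) := by rw [mul_assoc, vnorm_mul_self]

lemma enorm_inv_mulVec_self {n : ℕ} {M : Matrix (Fin n) (Fin n) ℝ} (hM : IsUnit M.det)
    (x : Fin n → ℝ) : enorm M⁻¹ (M *ᵥ x) = enorm M x := by
  rw [_root_.enorm, _root_.enorm, mulVec_mulVec, nonsing_inv_mul _ hM, one_mulVec, dotProduct_comm]

namespace Matrix.PosSemidef
variable {n : ℕ} {M : Matrix (Fin n) (Fin n) ℝ}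

lemma enorm_eq_norm (hM : M.PosSemidef) (x : Fin n → ℝ) :
    enorm M x = @norm _ (M.toSeminormedAddCommGroup hM).toNorm x := by
  let _ := M.toSeminormedAddCommGroup hM
  let _ := M.toInnerProductSpace hM
  rw [@norm_eq_sqrt_re_inner ℝ, _root_.enorm]
  rfl

lemma dotProduct_mulVec_le_enorm_mul_enorm (hM : M.PosSemidef) (u v : Fin n → ℝ) :
    M *ᵥ u ⬝ᵥ v ≤ enorm M u * enorm M v := by
  let _ := M.toSeminormedAddCommGroup hM
  let _ := M.toInnerProductSpace hM
  rw [hM.enorm_eq_norm, hM.enorm_eq_norm, mul_comm]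
  exact real_inner_le_norm v u

lemma enorm_add_le (hM : M.PosSemidef) (u v : Fin n → ℝ) :
    enorm M (u + v) ≤ enorm M u + enorm M v := by
  simpa only [hM.enorm_eq_norm] using
    @norm_add_le _ (M.toSeminormedAddCommGroup hM).toSeminormedAddGroup u v

lemma vnorm_mulVec_le_sqrt_specNorm_mul_enorm (hM : M.PosSemidef) (x : Fin n → ℝ) :
    vnorm (M *ᵥ x) ≤ √(specNorm M) * enorm M x := by
  have hsq : vnorm (M *ᵥ x) * vnorm (M *ᵥ x) ≤ √(specNorm M) * enorm M x * vnorm (M *ᵥ x) :=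
    calc vnorm (M *ᵥ x) * vnorm (M *ᵥ x) = M *ᵥ x ⬝ᵥ M *ᵥ x := vnorm_mul_self _
      _ ≤ enorm M x * enorm M (M *ᵥ x) := hM.dotProduct_mulVec_le_enorm_mul_enorm _ _
      _ ≤ enorm M x * (√(specNorm M) * vnorm (M *ᵥ x)) := by
        grw [enorm_le_sqrt_specNorm_mul_vnorm M (M *ᵥ x)]
        exact enorm_nonneg M x
      _ = _ := by ring
  nlinarith [vnorm_nonneg (M *ᵥ x), mul_nonneg (Real.sqrt_nonneg (specNorm M)) (enorm_nonneg M x)]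

end Matrix.PosSemidef

namespace Matrix.PosDef
variable {n : ℕ} {M : Matrix (Fin n) (Fin n) ℝ}

lemma vnorm_le_sqrt_specNorm_inv_mul_enorm (hM : M.PosDef) (x : Fin n → ℝ) :
    vnorm x ≤ √(specNorm M⁻¹) * enorm M x := by
  have hdet : IsUnit M.det := hM.det_pos.ne'.isUnit
  calc vnorm x = vnorm (M⁻¹ *ᵥ (M *ᵥ x)) := by
        rw [mulVec_mulVec, nonsing_inv_mul _ hdet, one_mulVec]
    _ ≤ √(specNorm M⁻¹) * enorm M⁻¹ (M *ᵥ x) :=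
      hM.inv.posSemidef.vnorm_mulVec_le_sqrt_specNorm_mul_enorm _
    _ = √(specNorm M⁻¹) * enorm M x := by rw [enorm_inv_mulVec_self hdet]

lemma enorm_inv_abs_le_sqrt_mul_enorm_inv_mulVec (hM : M.PosDef) (b : Fin n → ℝ) :
    enorm M⁻¹ (fun i => |b i|) ≤ √(specNorm M * specNorm M⁻¹) * enorm M (M⁻¹ *ᵥ b) :=
  calc enorm M⁻¹ (fun i => |b i|) ≤ √(specNorm M⁻¹) * vnorm (M *ᵥ (M⁻¹ *ᵥ b)) := by
        rw [mulVec_mulVec, mul_nonsing_inv _ hM.det_pos.ne'.isUnit, one_mulVec, ← vnorm_abs]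
        exact enorm_le_sqrt_specNorm_mul_vnorm _ _
    _ ≤ √(specNorm M⁻¹) * (√(specNorm M) * enorm M (M⁻¹ *ᵥ b)) := by
        grw [hM.posSemidef.vnorm_mulVec_le_sqrt_specNorm_mul_enorm]
    _ = √(specNorm M * specNorm M⁻¹) * enorm M (M⁻¹ *ᵥ b) := by
        rw [Real.sqrt_mul (specNorm_nonneg M)]
        ring

end Matrix.PosDef

theorem stmt10 {n : ℕ} (A : Matrix (Fin n) (Fin n) ℝ) (hA : A.PosDef)
    (b x : Fin n → ℝ) :
    enorm A⁻¹ ((fun i => |b i|) + (Matrix.of fun i j => |A i j|).mulVec (fun i => |x i|))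
      ≤ (Real.sqrt (specNorm A * specNorm A⁻¹)
            + specNorm (Matrix.of fun i j => |A i j|) * specNorm A⁻¹)
          * enorm A (A⁻¹.mulVec b)
        + specNorm (Matrix.of fun i j => |A i j|) * specNorm A⁻¹
          * enorm A (x - A⁻¹.mulVec b) := by
  set absA : Matrix (Fin n) (Fin n) ℝ := Matrix.of fun i j => |A i j|
  set x₀ := A⁻¹ *ᵥ b
  have hx_bound : vnorm x ≤ √(specNorm A⁻¹) * (enorm A x₀ + enorm A (x - x₀)) :=
    calc vnorm x ≤ vnorm x₀ + vnorm (x - x₀) := by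
          simpa only [add_sub_cancel] using vnorm_add_le x₀ (x - x₀)
      _ ≤ √(specNorm A⁻¹) * enorm A x₀ + √(specNorm A⁻¹) * enorm A (x - x₀) :=
          add_le_add (hA.vnorm_le_sqrt_specNorm_inv_mul_enorm _)
            (hA.vnorm_le_sqrt_specNorm_inv_mul_enorm _)
      _ = _ := by ring
  have hx_abs_bound : enorm A⁻¹ (absA *ᵥ fun i => |x i|)
      ≤ specNorm absA * specNorm A⁻¹ * (enorm A x₀ + enorm A (x - x₀)) :=
    calc enorm A⁻¹ (absA *ᵥ fun i => |x i|) ≤ √(specNorm A⁻¹) * (specNorm absA * vnorm x) := by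
          grw [enorm_le_sqrt_specNorm_mul_vnorm, vnorm_mulVec_le, vnorm_abs]
      _ ≤ √(specNorm A⁻¹) *
            (specNorm absA * (√(specNorm A⁻¹) * (enorm A x₀ + enorm A (x - x₀)))) := by
          grw [hx_bound]
          exact specNorm_nonneg absA
      _ = _ := by
          linear_combination (specNorm absA * (enorm A x₀ + enorm A (x - x₀))) *
            Real.mul_self_sqrt (specNorm_nonneg A⁻¹)
  calc _ ≤ enorm A⁻¹ (fun i => |b i|) + enorm A⁻¹ (absA *ᵥ fun i => |x i|) :=
        hA.inv.posSemidef.enorm_add_le _ _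
    _ ≤ √(specNorm A * specNorm A⁻¹) * enorm A x₀
          + specNorm absA * specNorm A⁻¹ * (enorm A x₀ + enorm A (x - x₀)) :=
        add_le_add (hA.enorm_inv_abs_le_sqrt_mul_enorm_inv_mulVec b) hx_abs_bound
    _ = _ := by ring
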